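/- arXiv:1907.08470 — 8 statements merged into one kernel-verified Lean document; each statement's English description precedes it below -/
import Mathlib

section
/- Let X and X̄ be disjoint sets in bijective correspondence p ↔ p̄. Two polynomials g, g' ∈ ℕ[X ∪ X̄] are congruent modulo the ideal generated by {p·p̄ : p ∈ X} if and only if they become identical after deleting from each of them all monomials that contain a pair of complementary indeterminates p and p̄. -/
open MvPolynomial

/-- The generating relation: `p · p̄ ~ 0` for each positive token `p : X`.
Positive tokens are `Sum.inl p`, negative (complementary) tokens are `Sum.inr p`. -/
def dualRel (X : Type*) (a b : MvPolynomial (X ⊕ X) ℕ) : Prop :=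
  ∃ p : X, a = MvPolynomial.X (Sum.inl p) * MvPolynomial.X (Sum.inr p) ∧ b = 0

/-- A monomial (exponent vector) contains a pair of complementary tokens. -/
def containsComplementary {X : Type*} (d : (X ⊕ X) →₀ ℕ) : Prop :=
  ∃ p : X, 0 < d (Sum.inl p) ∧ 0 < d (Sum.inr p)

section Aux

open scoped Classical

variable {X : Type*}

lemma cc_mono {d e : (X ⊕ X) →₀ ℕ} (hle : d ≤ e) (h : containsComplementary d) :
    containsComplementary e := by
  obtain ⟨p, h1, h2⟩ := h
  exact ⟨p, lt_of_lt_of_le h1 (hle _), lt_of_lt_of_le h2 (hle _)⟩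

/-- The congruence whose relation is "coefficients agree off complementary monomials". -/
def dualCon (X : Type*) : RingCon (MvPolynomial (X ⊕ X) ℕ) where
  r a b := ∀ d, ¬ containsComplementary d → coeff d a = coeff d b
  iseqv := ⟨fun _ _ _ => rfl, fun h d hd => (h d hd).symm,
    fun h1 h2 d hd => (h1 d hd).trans (h2 d hd)⟩
  add' h1 h2 d hd := by simp [coeff_add, h1 d hd, h2 d hd]
  mul' {w x y z} h1 h2 d hd := by
    classical
    rw [coeff_mul, coeff_mul]
    apply Finset.sum_congr rfl
    rintro ⟨d1, d2⟩ hmem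
    rw [Finset.HasAntidiagonal.mem_antidiagonal] at hmem
    have h1' : ¬ containsComplementary d1 := fun hc => hd (cc_mono (hmem ▸ le_add_right le_rfl) hc)
    have h2' : ¬ containsComplementary d2 := fun hc => hd (cc_mono (hmem ▸ le_add_left le_rfl) hc)
    simp [h1 d1 h1', h2 d2 h2']

lemma ringcon_sum {R : Type*} [NonAssocSemiring R] (c : RingCon R) {ι : Type*} (s : Finset ι)
    (f g : ι → R) (h : ∀ i ∈ s, c (f i) (g i)) :
    c (∑ i ∈ s, f i) (∑ i ∈ s, g i) := by
  classical
  induction s using Finset.induction with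
  | empty => simpa using c.refl 0
  | insert _ _ hni ih =>
    rw [Finset.sum_insert hni, Finset.sum_insert hni]
    exact c.add (h _ (Finset.mem_insert_self _ _))
      (ih fun i hi => h i (Finset.mem_insert_of_mem hi))

lemma mono_cc_zero {c : ℕ} {d : (X ⊕ X) →₀ ℕ} (hd : containsComplementary d) :
    ringConGen (dualRel X) (monomial d c) 0 := by
  obtain ⟨p, h1, h2⟩ := hd
  have hle : (Finsupp.single (Sum.inl p) 1 + Finsupp.single (Sum.inr p) 1) ≤ d := by
    intro q
    rcases eq_or_ne q (Sum.inl p) with rfl | hq1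
    · simpa [Finsupp.single_apply, Nat.one_le_iff_ne_zero, pos_iff_ne_zero] using h1
    rcases eq_or_ne q (Sum.inr p) with rfl | hq2
    · simpa [Finsupp.single_apply, Nat.one_le_iff_ne_zero, pos_iff_ne_zero] using h2
    · simp [Finsupp.single_apply, (Ne.symm hq1 : Sum.inl p ≠ q), (Ne.symm hq2 : Sum.inr p ≠ q)]
  set e := d - (Finsupp.single (Sum.inl p) 1 + Finsupp.single (Sum.inr p) 1) with he
  have hde : d = Finsupp.single (Sum.inl p) 1 + Finsupp.single (Sum.inr p) 1 + e := by
    rw [he, add_tsub_cancel_of_le hle]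
  have key : (monomial d c : MvPolynomial (X ⊕ X) ℕ)
      = (MvPolynomial.X (Sum.inl p) * MvPolynomial.X (Sum.inr p)) * monomial e c := by
    have hX : ∀ q : X ⊕ X, (MvPolynomial.X q : MvPolynomial (X ⊕ X) ℕ)
        = monomial (Finsupp.single q 1) 1 := fun q => rfl
    rw [hX, hX, monomial_mul, monomial_mul, one_mul, ← hde, one_mul]
  rw [key]
  have hgen : ringConGen (dualRel X)
      (MvPolynomial.X (Sum.inl p) * MvPolynomial.X (Sum.inr p)) 0 :=
    RingConGen.Rel.of _ _ ⟨p, rfl, rfl⟩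
  have := (ringConGen (dualRel X)).mul hgen ((ringConGen (dualRel X)).refl (monomial e c))
  simpa using this

lemma poly_equiv_filter (g : MvPolynomial (X ⊕ X) ℕ) :
    ringConGen (dualRel X)
      g (∑ d ∈ g.support, if containsComplementary d then 0 else monomial d (coeff d g)) := by
  classical
  conv_lhs => rw [g.as_sum]
  apply ringcon_sum
  intro d _
  by_cases hd : containsComplementary d
  · simpa [hd] using mono_cc_zero (c := coeff d g) hd
  · simp only [hd, if_false]
    exact (ringConGen (dualRel X)).refl _

lemma coeff_filter (g : MvPolynomial (X ⊕ X) ℕ) (e : (X ⊕ X) →₀ ℕ) :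
    coeff e (∑ d ∈ g.support, if containsComplementary d then 0 else monomial d (coeff d g))
      = if containsComplementary e then 0 else coeff e g := by
  classical
  rw [coeff_sum]
  by_cases he : containsComplementary e
  · simp only [he, if_true]
    apply Finset.sum_eq_zero
    intro d _
    by_cases hd : containsComplementary d
    · simp [hd]
    · simp only [hd, if_false, coeff_monomial]
      rcases eq_or_ne d e with rfl | h
      · exact absurd he hd
      · simp [h]
  · simp only [he, if_false]
    by_cases hmem : e ∈ g.support
    · rw [Finset.sum_eq_single e]
      · simp [he]
      · intro d _ hne
        by_cases hd : containsComplementary d <;> simp [hd, coeff_monomial, hne]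
      · intro h; exact absurd hmem h
    · rw [Finset.sum_eq_zero, eq_comm]
      · simpa using hmem
      · intro d hdm
        have hne : d ≠ e := fun h => hmem (h ▸ hdm)
        by_cases hd : containsComplementary d <;> simp [hd, coeff_monomial, hne]

end Aux

/-- Two polynomials g, g' ∈ ℕ[X ∪ X̄] are congruent modulo the
congruence generated by p·p̄ = 0 (p ∈ X) iff they become identical after deleting
all monomials containing a pair of complementary indeterminates, i.e. iff their
coefficients agree on all monomials not containing complementary tokens. -/
theorem stmt6 (X : Type*) (g g' : MvPolynomial (X ⊕ X) ℕ) :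
    ringConGen (dualRel X) g g' ↔
      ∀ d : (X ⊕ X) →₀ ℕ, ¬ containsComplementary d → coeff d g = coeff d g' := by
  classical
  constructor
  · intro h
    have hle : ringConGen (dualRel X) ≤ dualCon X := by
      apply RingCon.ringConGen_le.mpr
      rintro a b ⟨p, rfl, rfl⟩
      intro d hd
      have hX : ∀ q : X ⊕ X, (MvPolynomial.X q : MvPolynomial (X ⊕ X) ℕ)
          = monomial (Finsupp.single q 1) 1 := fun q => rfl
      rw [hX, hX, monomial_mul, one_mul, coeff_monomial, coeff_zero]
      split
      · next heq =>
        exfalso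
        apply hd
        refine ⟨p, ?_, ?_⟩ <;> simp [← heq, Finsupp.single_apply]
      · rfl
    exact hle h
  · intro h
    have h1 := poly_equiv_filter (X := X) g
    have h2 := poly_equiv_filter (X := X) g'
    have heq : (∑ d ∈ g.support, if containsComplementary d then 0 else monomial d (coeff d g))
        = ∑ d ∈ g'.support, if containsComplementary d then 0 else monomial d (coeff d g') := by
      apply MvPolynomial.ext
      intro e
      rw [coeff_filter, coeff_filter]
      by_cases he : containsComplementary e
      · simp [he]
      · simp [he, h e he]
    exact (ringConGen (dualRel X)).trans h1 (heq ▸ (ringConGen (dualRel X)).symm h2)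
end

section
/- The semiring ℕ[X, X̄] of dual-indeterminate polynomials is +-positive (a + b = 0 implies a = 0 and b = 0) but, when X is nonempty, has divisors of zero (there exist nonzero a, b with a·b = 0), hence is not positive. -/
/-- ℕ[X, X̄]: the semiring of dual-indeterminate polynomials, the quotient of
ℕ[X ∪ X̄] by the congruence generated by p·p̄ = 0. -/
def DualPoly (X : Type*) := (ringConGen (dualRel X)).Quotient

noncomputable instance (X : Type*) : CommSemiring (DualPoly X) :=
  inferInstanceAs (CommSemiring (ringConGen (dualRel X)).Quotient)

open MvPolynomial

/-- A monomial is "good" if it never contains both `p` and `p̄`. -/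
def Good {X : Type*} (m : (X ⊕ X) →₀ ℕ) : Prop :=
  ∀ p : X, m (Sum.inl p) = 0 ∨ m (Sum.inr p) = 0

lemma good_of_add {X : Type*} {m₁ m₂ m : (X ⊕ X) →₀ ℕ} (h : m₁ + m₂ = m)
    (hm : Good m) : Good m₁ ∧ Good m₂ := by
  constructor <;> intro p <;> rcases hm p with h0 | h0
  · left; have := congrArg (fun f => f (Sum.inl p)) h; simp at this; omega
  · right; have := congrArg (fun f => f (Sum.inr p)) h; simp at this; omega
  · left; have := congrArg (fun f => f (Sum.inl p)) h; simp at this; omega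
  · right; have := congrArg (fun f => f (Sum.inr p)) h; simp at this; omega

lemma XX_eq {X : Type*} (p : X) :
    (MvPolynomial.X (Sum.inl p) * MvPolynomial.X (Sum.inr p) : MvPolynomial (X ⊕ X) ℕ) =
      monomial (Finsupp.single (Sum.inl p) 1 + Finsupp.single (Sum.inr p) 1) 1 := by
  rw [monomial_single_add, pow_one, ← X_pow_eq_monomial, pow_one]

/-- The congruence "equal coefficients on all good monomials". -/
def goodCon (X : Type*) : RingCon (MvPolynomial (X ⊕ X) ℕ) where
  r a b := ∀ m, Good m → coeff m a = coeff m b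
  iseqv := ⟨fun _ _ _ => rfl, fun h m hm => (h m hm).symm,
    fun h₁ h₂ m hm => (h₁ m hm).trans (h₂ m hm)⟩
  add' := by
    intro a b c d hab hcd m hm
    show coeff m (a + c) = coeff m (b + d)
    simp only [coeff_add, hab m hm, hcd m hm]
  mul' := by
    intro a b c d hab hcd m hm
    show coeff m (a * c) = coeff m (b * d)
    classical
    simp only [coeff_mul]
    refine Finset.sum_congr rfl fun x hx => ?_
    rw [Finset.HasAntidiagonal.mem_antidiagonal] at hx
    obtain ⟨h1, h2⟩ := good_of_add hx hm
    rw [hab x.1 h1, hcd x.2 h2]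

lemma le_goodCon (X : Type*) : ringConGen (dualRel X) ≤ goodCon X := by
  refine RingCon.ringConGen_le.mpr fun a b hab => ?_
  obtain ⟨p, ha, hb⟩ := hab
  intro m hm
  subst ha hb
  classical
  rcases hm p with h0 | h0 <;>
  · rw [XX_eq, coeff_monomial, coeff_zero, if_neg]
    intro h
    subst h
    simp [Finsupp.single_apply] at h0

/-- Every polynomial supported on bad monomials is congruent to 0. -/
lemma bad_rel_zero (X : Type*) (a : MvPolynomial (X ⊕ X) ℕ)
    (h : ∀ m, Good m → coeff m a = 0) : ringConGen (dualRel X) a 0 := by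
  classical
  set c := ringConGen (dualRel X) with hc
  -- write a as a sum of its (bad) monomials
  rw [a.as_sum]
  have key : ∀ m ∈ a.support, c (monomial m (coeff m a)) 0 := by
    intro m hm
    have hbad : ¬ Good m := by
      intro hg
      exact (MvPolynomial.mem_support_iff.mp hm) (h m hg)
    simp only [Good, not_forall] at hbad
    push_neg at hbad
    obtain ⟨p, hp1, hp2⟩ := hbad
    set e : (X ⊕ X) →₀ ℕ := Finsupp.single (Sum.inl p) 1 + Finsupp.single (Sum.inr p) 1
    have hle : e ≤ m := by
      intro s
      rcases eq_or_ne s (Sum.inl p) with h | h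
      · subst h; simp [e, Finsupp.single_apply]; omega
      rcases eq_or_ne s (Sum.inr p) with h' | h'
      · subst h'; simp [e, Finsupp.single_apply]; omega
      · simp [e, Finsupp.single_apply, Ne.symm h, Ne.symm h']
    have hdecomp : monomial m (coeff m a) =
        monomial (m - e) (coeff m a) *
          (MvPolynomial.X (Sum.inl p) * MvPolynomial.X (Sum.inr p)) := by
      rw [XX_eq, monomial_mul, mul_one, tsub_add_cancel_of_le hle]
    rw [hdecomp]
    have hgen : c (MvPolynomial.X (Sum.inl p) * MvPolynomial.X (Sum.inr p))
        (0 : MvPolynomial (X ⊕ X) ℕ) :=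
      RingConGen.Rel.of _ _ ⟨p, rfl, rfl⟩
    have := c.mul (c.refl (monomial (m - e) (coeff m a))) hgen
    rwa [mul_zero] at this
  -- sum of things congruent to 0 is congruent to 0
  have : ∀ (s : Finset ((X ⊕ X) →₀ ℕ)), (∀ m ∈ s, c (monomial m (coeff m a)) 0) →
      c (∑ m ∈ s, monomial m (coeff m a)) 0 := by
    intro s
    induction s using Finset.induction_on with
    | empty => intro _; simpa using c.refl 0
    | insert _ _ hns ih =>
      intro hs
      rw [Finset.sum_insert hns]
      have h1 := hs _ (Finset.mem_insert_self _ _)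
      have h2 := ih fun m hm => hs m (Finset.mem_insert_of_mem hm)
      have := c.add h1 h2
      rwa [add_zero] at this
  exact this a.support key

/-- ℕ[X, X̄] is +-positive (a + b = 0 implies a = 0 and b = 0), but
for nonempty X it has divisors of zero, hence is not positive. -/
theorem stmt8 (X : Type*) :
    (∀ a b : DualPoly X, a + b = 0 → a = 0 ∧ b = 0) ∧
    (Nonempty X → ∃ a b : DualPoly X, a ≠ 0 ∧ b ≠ 0 ∧ a * b = 0) := by
  classical
  set c := ringConGen (dualRel X) with hc
  constructor
  · intro a b hab
    obtain ⟨a', rfl⟩ := Quotient.exists_rep a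
    obtain ⟨b', rfl⟩ := Quotient.exists_rep b
    have hab' : c (a' + b') 0 := by
      refine c.eq.mp ?_
      rw [RingCon.coe_add]
      exact hab
    have hgood := le_goodCon X hab'
    have h0 : ∀ m, Good m → coeff m a' = 0 ∧ coeff m b' = 0 := by
      intro m hm
      have := hgood m hm
      simp only [coeff_add, coeff_zero] at this
      omega
    constructor
    · exact c.eq.mpr (bad_rel_zero X a' fun m hm => (h0 m hm).1)
    · exact c.eq.mpr (bad_rel_zero X b' fun m hm => (h0 m hm).2)
  · rintro ⟨p⟩
    refine ⟨((MvPolynomial.X (Sum.inl p) : MvPolynomial (X ⊕ X) ℕ) : c.Quotient),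
      ((MvPolynomial.X (Sum.inr p) : MvPolynomial (X ⊕ X) ℕ) : c.Quotient), ?_, ?_, ?_⟩
    · intro h
      have hrel : c (MvPolynomial.X (Sum.inl p)) 0 := c.eq.mp h
      have := le_goodCon X hrel (Finsupp.single (Sum.inl p) 1)
        (fun q => Or.inr (by simp [Finsupp.single_apply]))
      simp [MvPolynomial.coeff_X] at this
    · intro h
      have hrel : c (MvPolynomial.X (Sum.inr p)) 0 := c.eq.mp h
      have := le_goodCon X hrel (Finsupp.single (Sum.inr p) 1)
        (fun q => Or.inl (by simp [Finsupp.single_apply]))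
      simp [MvPolynomial.coeff_X] at this
    · erw [← RingCon.coe_mul]
      exact c.eq.mpr (RingConGen.Rel.of _ _ ⟨p, rfl, rfl⟩)
end

section
/- Let G be a finite acyclic game graph with K-valuations f₀, f₁ for the two players defined via backwards induction from basic valuations on terminal positions. If f₀ and f₁ are separating on the terminal positions (for every terminal t, f₀(t) = 0 or f₁(t) = 0), then they are separating on all positions of G. -/
/-- A finite game graph: positions `V`, each position either belongs to one of the
two players (`owner v = some σ`, with `σ : Bool` naming the player) or is terminal
(`owner v = none`); `succ v` is the finite set of immediate successors, which is
empty iff `v` is terminal.  Acyclicity is expressed by well-foundedness of the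
edge relation. -/
structure GameGraph (V : Type*) where
  owner : V → Option Bool
  succ : V → Finset V
  terminal_iff : ∀ v, succ v = ∅ ↔ owner v = none
  acyclic : WellFounded fun w v => w ∈ succ v

/-- `f : V → K` is the K-valuation for Player `σ` extending, by backwards
induction, the basic valuation of terminal positions (the values `f t` for
`owner t = none`) and the valuation `h` of the moves:
at positions of Player `σ` it is the sum, and at positions of the opponent the
product, of the values `h v w · f w` over the successors `w` of `v`. -/
def IsValuation {V K : Type*} [CommSemiring K] (G : GameGraph V) (σ : Bool)
    (h : V → V → K) (f : V → K) : Prop :=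
  ∀ v : V,
    (G.owner v = some σ → f v = ∑ w ∈ G.succ v, h v w * f w) ∧
    (G.owner v = some (!σ) → f v = ∏ w ∈ G.succ v, h v w * f w)

/-- for a finite acyclic game graph with K-valuations f₀, f₁ for the
two players into a +-positive commutative semiring, if f₀ and f₁ are separating on
the terminal positions (f₀ t = 0 or f₁ t = 0 for each terminal t), then they are
separating on all positions. -/
theorem stmt11 {V K : Type*} [Fintype V] [CommSemiring K]
    (plusPos : ∀ a b : K, a + b = 0 → a = 0 ∧ b = 0)
    (G : GameGraph V) (h0 h1 : V → V → K)
    (hne0 : ∀ v w, w ∈ G.succ v → h0 v w ≠ 0) (hne1 : ∀ v w, w ∈ G.succ v → h1 v w ≠ 0)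
    (f0 f1 : V → K)
    (hf0 : IsValuation G false h0 f0) (hf1 : IsValuation G true h1 f1)
    (sep : ∀ t, G.owner t = none → f0 t = 0 ∨ f1 t = 0) :
    ∀ v : V, f0 v = 0 ∨ f1 v = 0 := by
  intro v
  induction v using G.acyclic.induction with
  | _ v ih =>
    match ho : G.owner v with
    | none => exact sep v ho
    | some false =>
      by_cases hex : ∃ w ∈ G.succ v, f1 w = 0
      · obtain ⟨w, hw, hw0⟩ := hex
        right
        rw [(hf1 v).2 ho, Finset.prod_eq_zero hw (by rw [hw0, mul_zero])]
      · left
        rw [(hf0 v).1 ho]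
        apply Finset.sum_eq_zero
        intro w hw
        rcases ih w hw with h | h
        · rw [h, mul_zero]
        · exact absurd ⟨w, hw, h⟩ hex
    | some true =>
      by_cases hex : ∃ w ∈ G.succ v, f0 w = 0
      · obtain ⟨w, hw, hw0⟩ := hex
        left
        rw [(hf0 v).2 ho, Finset.prod_eq_zero hw (by rw [hw0, mul_zero])]
      · right
        rw [(hf1 v).1 ho]
        apply Finset.sum_eq_zero
        intro w hw
        rcases ih w hw with h | h
        · exact absurd ⟨w, hw, h⟩ hex
        · rw [h, mul_zero]
end

section
/- Let G be a finite acyclic game graph with K-valuations f₀, f₁ for the two players in a +-positive commutative semiring K. If f₀ and f₁ are weakly separating on the terminal positions (f₀(t)·f₁(t) = 0 for all terminals t), then they are weakly separating on all positions: f₀(v)·f₁(v) = 0 for all v ∈ V. -/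
/-- for a finite acyclic game graph with K-valuations f₀, f₁ for the
two players into a +-positive commutative semiring, if f₀ and f₁ are weakly
separating on the terminal positions (f₀ t · f₁ t = 0 for each terminal t), then
they are weakly separating on all positions: f₀ v · f₁ v = 0 for all v. -/
theorem stmt12 {V K : Type*} [Fintype V] [CommSemiring K]
    (plusPos : ∀ a b : K, a + b = 0 → a = 0 ∧ b = 0)
    (G : GameGraph V) (h0 h1 : V → V → K)
    (hne0 : ∀ v w, w ∈ G.succ v → h0 v w ≠ 0) (hne1 : ∀ v w, w ∈ G.succ v → h1 v w ≠ 0)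
    (f0 f1 : V → K)
    (hf0 : IsValuation G false h0 f0) (hf1 : IsValuation G true h1 f1)
    (sep : ∀ t, G.owner t = none → f0 t * f1 t = 0) :
    ∀ v : V, f0 v * f1 v = 0 := by
  classical
  intro v
  induction v using G.acyclic.induction with
  | _ v ih =>
    match hv : G.owner v with
    | none => exact sep v hv
    | some false =>
      rw [(hf0 v).1 hv, (hf1 v).2 (by simpa using hv), Finset.sum_mul]
      refine Finset.sum_eq_zero fun w hw => ?_
      rw [← Finset.mul_prod_erase _ _ hw,
        show h0 v w * f0 w * (h1 v w * f1 w * ∏ u ∈ (G.succ v).erase w, h1 v u * f1 u)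
          = f0 w * f1 w * (h0 v w * h1 v w * ∏ u ∈ (G.succ v).erase w, h1 v u * f1 u) by ring,
        ih w hw, zero_mul]
    | some true =>
      rw [(hf0 v).2 (by simpa using hv), (hf1 v).1 hv, Finset.mul_sum]
      refine Finset.sum_eq_zero fun w hw => ?_
      rw [← Finset.mul_prod_erase _ _ hw,
        show (h0 v w * f0 w * ∏ u ∈ (G.succ v).erase w, h0 v u * f0 u) * (h1 v w * f1 w)
          = f0 w * f1 w * (h0 v w * h1 v w * ∏ u ∈ (G.succ v).erase w, h0 v u * f0 u) by ring,
        ih w hw, zero_mul]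
end

section
/- Let G be a finite acyclic game graph with valuations f₀, f₁ into a positive commutative semiring K (no zero divisors and +-positive). If f₀ and f₁ are strongly separating on the terminal positions (for each terminal t, exactly one of f₀(t), f₁(t) is 0, and the other is nonzero, i.e. f₀(t)·f₁(t)=0 and f₀(t)+f₁(t) ≠ 0), then they are strongly separating on all positions of G. -/
/-- for a finite acyclic game graph with valuations f₀, f₁ into a
positive commutative semiring (+-positive and without zero divisors), if f₀ and f₁
are strongly separating on the terminal positions (f₀ t · f₁ t = 0 and
f₀ t + f₁ t ≠ 0 for each terminal t), then they are strongly separating on all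
positions. -/
theorem stmt13 {V K : Type*} [Fintype V] [CommSemiring K]
    (plusPos : ∀ a b : K, a + b = 0 → a = 0 ∧ b = 0)
    (noZeroDiv : ∀ a b : K, a * b = 0 → a = 0 ∨ b = 0)
    (G : GameGraph V) (h0 h1 : V → V → K)
    (hne0 : ∀ v w, w ∈ G.succ v → h0 v w ≠ 0) (hne1 : ∀ v w, w ∈ G.succ v → h1 v w ≠ 0)
    (f0 f1 : V → K)
    (hf0 : IsValuation G false h0 f0) (hf1 : IsValuation G true h1 f1)
    (sep : ∀ t, G.owner t = none → f0 t * f1 t = 0 ∧ f0 t + f1 t ≠ 0) :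
    ∀ v : V, f0 v * f1 v = 0 ∧ f0 v + f1 v ≠ 0 := by
  classical
  by_cases htriv : (1 : K) = 0
  · -- trivial semiring: everything is 0, contradiction with sep / induction
    have hall : ∀ a : K, a = 0 := fun a => by
      calc a = a * 1 := (mul_one a).symm
        _ = a * 0 := by rw [htriv]
        _ = 0 := mul_zero a
    intro v
    induction v using WellFounded.induction G.acyclic with
    | _ v ih =>
    rcases Finset.eq_empty_or_nonempty (G.succ v) with he | ⟨w, hw⟩
    · have := (sep v ((G.terminal_iff v).mp he)).2
      exact absurd (by rw [hall (f0 v), hall (f1 v), add_zero]) this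
    · exact absurd (by rw [hall (f0 w), hall (f1 w), add_zero]) (ih w hw).2
  have sumzero : ∀ (s : Finset V) (g : V → K), (∑ w ∈ s, g w) = 0 → ∀ w ∈ s, g w = 0 := by
    intro s g
    induction s using Finset.induction_on with
    | empty => simp
    | insert _ _ hx ih =>
      rw [Finset.sum_insert hx]
      intro h w hw
      obtain ⟨ha, hb⟩ := plusPos _ _ h
      rcases Finset.mem_insert.mp hw with rfl | hw
      · exact ha
      · exact ih hb w hw
  have prodzero : ∀ (s : Finset V) (g : V → K), (∏ w ∈ s, g w) = 0 → ∃ w ∈ s, g w = 0 := by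
    intro s g
    induction s using Finset.induction_on with
    | empty => intro h; rw [Finset.prod_empty] at h; exact absurd h htriv
    | insert _ _ hx ih =>
      rw [Finset.prod_insert hx]
      intro h
      rcases noZeroDiv _ _ h with h | h
      · exact ⟨_, Finset.mem_insert_self _ _, h⟩
      · obtain ⟨w, hw, hw0⟩ := ih h
        exact ⟨w, Finset.mem_insert_of_mem hw, hw0⟩
  intro v
  induction v using WellFounded.induction G.acyclic with
  | _ v ih =>
  match ho : G.owner v with
  | none => exact sep v ho
  | some b =>
    have key : ∀ w ∈ G.succ v, (f0 w = 0 ∧ f1 w ≠ 0) ∨ (f0 w ≠ 0 ∧ f1 w = 0) := by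
      intro w hw
      obtain ⟨hz, hs⟩ := ih w hw
      rcases noZeroDiv _ _ hz with h | h
      · exact Or.inl ⟨h, fun h1z => hs (by rw [h, h1z, add_zero])⟩
      · exact Or.inr ⟨fun h0z => hs (by rw [h, h0z, add_zero]), h⟩
    cases b with
    | false =>
      have e0 : f0 v = ∑ w ∈ G.succ v, h0 v w * f0 w := (hf0 v).1 ho
      have e1 : f1 v = ∏ w ∈ G.succ v, h1 v w * f1 w := (hf1 v).2 ho
      by_cases hex : ∃ w ∈ G.succ v, f1 w = 0
      · obtain ⟨w, hw, hw0⟩ := hex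
        have hf1v : f1 v = 0 := by
          rw [e1]; exact Finset.prod_eq_zero hw (by rw [hw0, mul_zero])
        have hf0v : f0 v ≠ 0 := by
          intro h
          rw [e0] at h
          have := sumzero _ _ h w hw
          rcases noZeroDiv _ _ this with h' | h'
          · exact hne0 v w hw h'
          · rcases key w hw with ⟨ha, hb⟩ | ⟨ha, hb⟩
            · exact hb hw0
            · exact ha h'
        exact ⟨by rw [hf1v, mul_zero], fun h => hf0v (plusPos _ _ h).1⟩
      · push_neg at hex
        have hf0v : f0 v = 0 := by
          rw [e0]
          apply Finset.sum_eq_zero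
          intro w hw
          rcases key w hw with ⟨ha, hb⟩ | ⟨ha, hb⟩
          · rw [ha, mul_zero]
          · exact absurd hb (hex w hw)
        have hf1v : f1 v ≠ 0 := by
          rw [e1]
          intro h
          obtain ⟨w, hw, hw0⟩ := prodzero _ _ h
          rcases noZeroDiv _ _ hw0 with h' | h'
          · exact hne1 v w hw h'
          · exact hex w hw h'
        exact ⟨by rw [hf0v, zero_mul], fun h => hf1v (plusPos _ _ h).2⟩
    | true =>
      have e1 : f1 v = ∑ w ∈ G.succ v, h1 v w * f1 w := (hf1 v).1 ho
      have e0 : f0 v = ∏ w ∈ G.succ v, h0 v w * f0 w := (hf0 v).2 ho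
      by_cases hex : ∃ w ∈ G.succ v, f0 w = 0
      · obtain ⟨w, hw, hw0⟩ := hex
        have hf0v : f0 v = 0 := by
          rw [e0]; exact Finset.prod_eq_zero hw (by rw [hw0, mul_zero])
        have hf1v : f1 v ≠ 0 := by
          intro h
          rw [e1] at h
          have := sumzero _ _ h w hw
          rcases noZeroDiv _ _ this with h' | h'
          · exact hne1 v w hw h'
          · rcases key w hw with ⟨ha, hb⟩ | ⟨ha, hb⟩
            · exact hb h'
            · exact ha hw0
        exact ⟨by rw [hf0v, zero_mul], fun h => hf1v (plusPos _ _ h).2⟩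
      · push_neg at hex
        have hf1v : f1 v = 0 := by
          rw [e1]
          apply Finset.sum_eq_zero
          intro w hw
          rcases key w hw with ⟨ha, hb⟩ | ⟨ha, hb⟩
          · exact absurd ha (hex w hw)
          · rw [hb, mul_zero]
        have hf0v : f0 v ≠ 0 := by
          rw [e0]
          intro h
          obtain ⟨w, hw, hw0⟩ := prodzero _ _ h
          rcases noZeroDiv _ _ hw0 with h' | h'
          · exact hne0 v w hw h'
          · exact hex w hw h'
        exact ⟨by rw [hf1v, mul_zero], fun h => hf0v (plusPos _ _ h).1⟩
end

section
/- If Z is a counting bisimulation between two finite acyclic game graphs G and G' that respects the basic valuations of terminal positions and moves into a commutative semiring K, then the induced K-valuations agree on all Z-related positions: f_σ(v) = f'_σ(v') for all (v, v') ∈ Z. -/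
/-- if Z is a counting bisimulation between two finite acyclic game
graphs G and G' that respects the basic valuations of terminal positions and of
moves into a commutative semiring K, then the induced K-valuations for each
player σ agree on all Z-related positions. -/
theorem stmt15 {V V' K : Type*} [Fintype V] [Fintype V'] [CommSemiring K]
    (G : GameGraph V) (G' : GameGraph V') (Z : V → V' → Prop)
    -- Z is a counting bisimulation: related positions belong to the same player
    -- (and are simultaneously terminal), and there is a local bijection between
    -- their successors relating corresponding successors.
    (hbisim : ∀ v v', Z v v' → G.owner v = G'.owner v' ∧
      ∃ z : {w // w ∈ G.succ v} ≃ {w' // w' ∈ G'.succ v'}, ∀ w, Z w.1 (z w).1)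
    (σ : Bool) (h : V → V → K) (h' : V' → V' → K) (f : V → K) (f' : V' → K)
    (hne : ∀ v w, w ∈ G.succ v → h v w ≠ 0) (hne' : ∀ v w, w ∈ G'.succ v → h' v w ≠ 0)
    -- Z respects the basic valuations of terminal positions and of moves:
    (hrespT : ∀ t t', Z t t' → G.owner t = none → f t = f' t')
    (hrespE : ∀ v v' w w', Z v v' → Z w w' → h v w = h' v' w')
    (hf : IsValuation G σ h f) (hf' : IsValuation G' σ h' f') :
    ∀ v v', Z v v' → f v = f' v' := by
  intro v
  induction v using G.acyclic.induction with
  | _ v ih =>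
  intro v' hZ
  obtain ⟨how, z, hz⟩ := hbisim v v' hZ
  have key : ∀ (w : {w // w ∈ G.succ v}), h v w.1 * f w.1 = h' v' (z w).1 * f' (z w).1 := by
    intro w
    rw [hrespE v v' w.1 (z w).1 hZ (hz w), ih w.1 w.2 (z w).1 (hz w)]
  match ho : G.owner v with
  | none =>
    exact hrespT v v' hZ ho
  | some b =>
    have hb : b = σ ∨ b = !σ := by cases b <;> cases σ <;> simp
    cases hb with
    | inl hb =>
      subst hb
      rw [(hf v).1 ho, (hf' v').1 (how ▸ ho)]
      rw [← Finset.sum_attach (G.succ v), ← Finset.sum_attach (G'.succ v')]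
      exact Fintype.sum_equiv z _ _ key
    | inr hb =>
      subst hb
      rw [(hf v).2 ho, (hf' v').2 (how ▸ ho)]
      rw [← Finset.prod_attach (G.succ v), ← Finset.prod_attach (G'.succ v')]
      exact Fintype.prod_equiv z _ _ key
end

section
/- Sum-of-strategies theorem for acyclic games: for any commutative semiring K and finite acyclic game graph G with valuations f_σ : T → K and h_σ : E → K\{0}, the backwards-induction valuation satisfies f_σ(v) = Σ over all strategies S of Player σ from v of F(S), where F(S) = Π_{e∈E} h_σ(e)^{#_S(e)} · Π_{t∈T} f_σ(t)^{#_S(t)}, with #_S counting the occurrences of each move and terminal in the strategy tree. -/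
/-- A strategy of Player `σ` from position `v` in the game `G`, viewed as its tree
of admitted histories (a subtree of the tree unraveling of `G` from `v`): at a
terminal the play stops; at a position of Player `σ` exactly one successor is
chosen; at a position of the opponent all successors are kept. -/
inductive StratTree {V : Type*} (G : GameGraph V) (σ : Bool) : V → Type _
  | terminal (v : V) : G.owner v = none → StratTree G σ v
  | choice (v w : V) : G.owner v = some σ → w ∈ G.succ v →
      StratTree G σ w → StratTree G σ v
  | branch (v : V) : G.owner v = some (!σ) →
      ((w : V) → w ∈ G.succ v → StratTree G σ w) → StratTree G σ v

/-- `countT S t` = `#_S(t)`: the number of occurrences of the terminal position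
`t` in the strategy tree `S`. -/
def countT {V : Type*} [DecidableEq V] {G : GameGraph V} {σ : Bool} :
    {v : V} → StratTree G σ v → V → ℕ
  | _, .terminal v _, t => if t = v then 1 else 0
  | _, .choice _ _ _ _ s, t => countT s t
  | _, .branch v _ s, t => ∑ w ∈ (G.succ v).attach, countT (s w.1 w.2) t

/-- `countE S a b` = `#_S(e)` for the move `e = (a,b)`: the number of occurrences
of this move in the strategy tree `S`. -/
def countE {V : Type*} [DecidableEq V] {G : GameGraph V} {σ : Bool} :
    {v : V} → StratTree G σ v → V → V → ℕ
  | _, .terminal _ _, _, _ => 0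
  | _, .choice v w _ _ s, a, b => (if a = v ∧ b = w then 1 else 0) + countE s a b
  | _, .branch v _ s, a, b =>
      (if a = v ∧ b ∈ G.succ v then 1 else 0) + ∑ w ∈ (G.succ v).attach, countE (s w.1 w.2) a b

/-- The provenance value of a strategy:
`F(S) = Π_{e ∈ E} h(e)^{#_S(e)} · Π_{t ∈ T} f(t)^{#_S(t)}`. -/
def stratValue {V K : Type*} [Fintype V] [DecidableEq V] [CommSemiring K]
    {G : GameGraph V} {σ : Bool} (h : V → V → K) (f : V → K)
    {v : V} (S : StratTree G σ v) : K :=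
  (∏ a : V, ∏ b ∈ G.succ a, h a b ^ countE S a b) *
    ∏ t ∈ Finset.univ.filter (fun t : V => G.owner t = none), f t ^ countT S t

section Aux

variable {V K : Type*} [Fintype V] [DecidableEq V] [CommSemiring K]
  {G : GameGraph V} {σ : Bool} (h : V → V → K) (f : V → K)

lemma val_terminal (v : V) (hv : G.owner v = none) :
    stratValue h f (StratTree.terminal (G := G) (σ := σ) v hv) = f v := by
  simp only [stratValue, countE, countT, pow_zero, Finset.prod_const_one, one_mul]
  rw [Finset.prod_congr rfl (g := fun t => if t = v then f t else 1)
    (fun t _ => by by_cases ht : t = v <;> simp [ht]), Finset.prod_ite_eq' _ v f, if_pos (by simp [hv])]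

lemma val_choice (v w : V) (hv : G.owner v = some σ) (hw : w ∈ G.succ v)
    (s : StratTree G σ w) :
    stratValue h f (StratTree.choice v w hv hw s) = h v w * stratValue h f s := by
  have key : (∏ a : V, ∏ b ∈ G.succ a, h a b ^ (if a = v ∧ b = w then 1 else 0)) = h v w := by
    rw [Finset.prod_eq_single v
      (fun a _ ha => Finset.prod_eq_one (fun b _ => by simp [ha]))
      (fun hmem => absurd (Finset.mem_univ v) hmem)]
    rw [Finset.prod_congr rfl (g := fun b => if b = w then h v b else 1)
      (fun b _ => by by_cases hb : b = w <;> simp [hb]),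
      Finset.prod_ite_eq' _ w (h v), if_pos hw]
  simp only [stratValue, countE, countT, pow_add, Finset.prod_mul_distrib, key]
  ring

lemma val_branch (v : V) (hv : G.owner v = some (!σ))
    (s : (w : V) → w ∈ G.succ v → StratTree G σ w) :
    stratValue h f (StratTree.branch v hv s)
      = ∏ w ∈ (G.succ v).attach, (h v w.1 * stratValue h f (s w.1 w.2)) := by
  have key : (∏ a : V, ∏ b ∈ G.succ a, h a b ^ (if a = v ∧ b ∈ G.succ v then 1 else 0))
      = ∏ b ∈ G.succ v, h v b := by
    rw [Finset.prod_eq_single v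
      (fun a _ ha => Finset.prod_eq_one (fun b _ => by simp [ha]))
      (fun hmem => absurd (Finset.mem_univ v) hmem)]
    exact Finset.prod_congr rfl (fun b hb => by simp [hb])
  have eswap : (∏ a : V, ∏ b ∈ G.succ a,
        h a b ^ (∑ w ∈ (G.succ v).attach, countE (s w.1 w.2) a b))
      = ∏ w ∈ (G.succ v).attach, ∏ a : V, ∏ b ∈ G.succ a, h a b ^ countE (s w.1 w.2) a b := by
    rw [Finset.prod_comm]
    exact Finset.prod_congr rfl (fun a _ => by
      rw [Finset.prod_congr rfl (fun b _ => (Finset.prod_pow_eq_pow_sum _ _ _).symm),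
        Finset.prod_comm])
  have tswap : (∏ t ∈ Finset.univ.filter (fun t : V => G.owner t = none),
        f t ^ (∑ w ∈ (G.succ v).attach, countT (s w.1 w.2) t))
      = ∏ w ∈ (G.succ v).attach, ∏ t ∈ Finset.univ.filter (fun t : V => G.owner t = none),
          f t ^ countT (s w.1 w.2) t := by
    rw [Finset.prod_congr rfl (fun t _ => (Finset.prod_pow_eq_pow_sum _ _ _).symm),
      Finset.prod_comm]
  simp only [stratValue, countE, countT, pow_add, Finset.prod_mul_distrib, key, eswap, tswap]
  rw [← Finset.prod_attach (G.succ v) (fun b => h v b), mul_assoc]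

def equivChoice (v : V) (hv : G.owner v = some σ) :
    StratTree G σ v ≃ Σ w : G.succ v, StratTree G σ w.1 where
  toFun S := match S with
    | .terminal _ h' => absurd (h'.symm.trans hv) (by simp)
    | .choice _ w _ hw s => ⟨⟨w, hw⟩, s⟩
    | .branch _ h' _ => absurd (hv.symm.trans h') (by simp)
  invFun p := .choice v p.1.1 hv p.1.2 p.2
  left_inv S := by
    cases S with
    | terminal _ h' => exact absurd (h'.symm.trans hv) (by simp)
    | choice _ w h' hw s => rfl
    | branch _ h' _ => exact absurd (hv.symm.trans h') (by simp)
  right_inv p := rfl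

def equivBranch (v : V) (hv : G.owner v = some (!σ)) :
    StratTree G σ v ≃ ∀ w : G.succ v, StratTree G σ w.1 where
  toFun S := match S with
    | .terminal _ h' => absurd (h'.symm.trans hv) (by simp)
    | .choice _ _ h' _ _ => absurd (h'.symm.trans hv) (by simp)
    | .branch _ _ s => fun w => s w.1 w.2
  invFun g := .branch v hv (fun w hw => g ⟨w, hw⟩)
  left_inv S := by
    cases S with
    | terminal _ h' => exact absurd (h'.symm.trans hv) (by simp)
    | choice _ _ h' _ _ => exact absurd (h'.symm.trans hv) (by simp)
    | branch _ h' s => rfl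
  right_inv g := rfl

end Aux

/- STATEMENT 16 (sum-of-strategies theorem for acyclic games): for any
commutative semiring K and finite acyclic game graph G with basic valuations
`f` on the terminal positions and `h ≠ 0` on the moves, the backwards-induction
valuation satisfies, at every position `v`,
`f v = Σ_{S ∈ Strat_σ(v)} F(S)`. -/
set_option maxHeartbeats 1000000

/-- sum-of-strategies theorem for acyclic games: for any
commutative semiring K and finite acyclic game graph G with basic valuations
`f` on the terminal positions and `h ≠ 0` on the moves, the backwards-induction
valuation satisfies, at every position `v`,
`f v = Σ_{S ∈ Strat_σ(v)} F(S)`. -/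
theorem stmt16 {V K : Type*} [Fintype V] [DecidableEq V] [CommSemiring K]
    (G : GameGraph V) (σ : Bool) (h : V → V → K) (f : V → K)
    (hne : ∀ v w, w ∈ G.succ v → h v w ≠ 0)
    (hf : IsValuation G σ h f)
    [∀ v : V, Fintype (StratTree G σ v)] :
    ∀ v : V, f v = ∑ S : StratTree G σ v, stratValue h f S := by
  refine fun v => G.acyclic.induction
    (C := fun v => f v = ∑ S : StratTree G σ v, stratValue h f S) v ?_
  intro v ih
  cases hov : G.owner v with
  | none =>
    haveI : Unique (StratTree G σ v) :=
      { default := .terminal v hov,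
        uniq := fun S => by
          cases S with
          | terminal _ h' => rfl
          | choice _ _ h' _ _ => exact absurd (h'.symm.trans hov) (by simp)
          | branch _ h' _ => exact absurd (h'.symm.trans hov) (by simp) }
    rw [Fintype.sum_unique, Subsingleton.elim (default : StratTree G σ v)
      (StratTree.terminal v hov)]
    exact (val_terminal h f v hov).symm
  | some b =>
    rcases eq_or_ne b σ with hb | hb
    · rw [hb] at hov
      rw [(hf v).1 hov, ← Equiv.sum_comp (equivChoice (σ := σ) v hov).symm (stratValue h f)]
      have step : ∀ p : Σ w : G.succ v, StratTree G σ w.1,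
          stratValue h f ((equivChoice v hov).symm p) = h v p.1.1 * stratValue h f p.2 :=
        fun p => val_choice h f v p.1.1 hov p.1.2 p.2
      rw [Fintype.sum_congr _ _ step, ← Finset.univ_sigma_univ, Finset.sum_sigma]
      rw [Finset.univ_eq_attach, ← Finset.sum_attach (G.succ v) (fun w => h v w * f w)]
      exact Finset.sum_congr rfl (fun w _ => by
        rw [ih w.1 w.2, Finset.mul_sum])
    · have hb' : b = !σ := by cases b <;> cases σ <;> simp_all
      subst hb'
      rw [(hf v).2 hov, ← Equiv.sum_comp (equivBranch (σ := σ) v hov).symm (stratValue h f)]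
      have step : ∀ g : (w : G.succ v) → StratTree G σ w.1,
          stratValue h f ((equivBranch v hov).symm g)
            = ∏ w : G.succ v, (h v w.1 * stratValue h f (g w)) := fun g => by
        rw [Finset.univ_eq_attach]
        exact val_branch h f v hov _
      rw [Fintype.sum_congr _ _ step, ← Fintype.piFinset_univ,
        ← Finset.prod_univ_sum (fun _ => Finset.univ)
          (fun (w : G.succ v) (S : StratTree G σ w.1) => h v w.1 * stratValue h f S)]
      rw [Finset.univ_eq_attach, ← Finset.prod_attach (G.succ v) (fun w => h v w * f w)]
      exact Finset.prod_congr rfl (fun w _ => by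
        rw [ih w.1 w.2, Finset.mul_sum])
end

section
/- If h_σ(e) = 1 for all moves e, or if the semiring K is multiplicatively idempotent (a·a = a for all a), then for every strategy S of Player σ from v in a finite acyclic game, the strategy value equals the product of the play values: F(S) = Π_{x ∈ Plays(S)} f_σ(x), where the value of a play x = v₀…v_m is f_σ(x) = h_σ(v₀v₁)···h_σ(v_{m−1}v_m)·f_σ(v_m). -/
/-- The multiset of (maximal) plays admitted by a strategy, each play recorded as
the sequence of positions it visits. -/
def plays {V : Type*} {G : GameGraph V} {σ : Bool} :
    {v : V} → StratTree G σ v → Multiset (List V)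
  | _, .terminal v _ => {[v]}
  | _, .choice v _ _ _ s => (plays s).map (List.cons v)
  | _, .branch v _ s =>
      ((G.succ v).attach.val.bind fun w => (plays (s w.1 w.2)).map (List.cons v))

/-- The value of a play `x = v₀ v₁ … v_m`:
`f_σ(x) = h(v₀v₁) ··· h(v_{m-1}v_m) · f(v_m)`. -/
def playVal {V K : Type*} [CommSemiring K] (h : V → V → K) (f : V → K) : List V → K
  | [] => 1
  | [v] => f v
  | v :: w :: rest => h v w * playVal h f (w :: rest)

section Aux

variable {V K : Type*} [Fintype V] [DecidableEq V] [CommSemiring K]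
variable {G : GameGraph V} {σ : Bool}

lemma aux_pow_idem (hid : ∀ a : K, a * a = a) (x : K) :
    ∀ n : ℕ, 0 < n → x ^ n = x
  | 1, _ => pow_one x
  | (n+2), _ => by
      rw [pow_succ, aux_pow_idem hid x (n+1) (Nat.succ_pos _)]
      exact hid x

lemma aux_plays_ne (h : V → V → K) : ∀ {v : V} (S : StratTree G σ v), plays S ≠ 0
  | _, .terminal v hv => by simp [plays]
  | _, .choice v w hv hw s => by
      simp only [plays, ne_eq, Multiset.map_eq_zero]
      exact aux_plays_ne h s
  | _, .branch v hv s => by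
      have hne : (G.succ v).Nonempty := by
        rw [Finset.nonempty_iff_ne_empty]
        intro h0; rw [G.terminal_iff] at h0; simp [h0] at hv
      obtain ⟨w, hw⟩ := hne
      obtain ⟨x, hx⟩ := Multiset.exists_mem_of_ne_zero (aux_plays_ne h (s w hw))
      have : (v :: x) ∈ plays (.branch v hv s) := by
        simp only [plays, Multiset.mem_bind, Multiset.mem_map]
        exact ⟨⟨w, hw⟩, Finset.mem_attach _ _, x, hx, rfl⟩
      intro h0
      rw [h0] at this
      exact absurd this (Multiset.notMem_zero _)

lemma aux_plays_head : ∀ {v : V} (S : StratTree G σ v),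
    ∀ x ∈ plays S, ∃ r, x = v :: r
  | _, .terminal v hv, x, hx => by
      simp only [plays, Multiset.mem_singleton] at hx
      exact ⟨[], hx⟩
  | _, .choice v w hv hw s, x, hx => by
      simp only [plays, Multiset.mem_map] at hx
      obtain ⟨y, _, rfl⟩ := hx
      exact ⟨y, rfl⟩
  | _, .branch v hv s, x, hx => by
      simp only [plays, Multiset.mem_bind, Multiset.mem_map] at hx
      obtain ⟨w, _, y, _, rfl⟩ := hx
      exact ⟨y, rfl⟩

lemma aux_ite_prod (h : V → V → K) {v w : V} (hw : w ∈ G.succ v) :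
    (∏ a : V, ∏ b ∈ G.succ a, h a b ^ (if a = v ∧ b = w then 1 else 0)) = h v w := by
  have key : ∀ a : V, (∏ b ∈ G.succ a, h a b ^ (if a = v ∧ b = w then 1 else 0))
      = if a = v then h v w else 1 := by
    intro a
    by_cases ha : a = v
    · subst ha
      simp only [true_and, if_pos rfl]
      calc (∏ b ∈ G.succ a, h a b ^ (if b = w then 1 else 0))
          = ∏ b ∈ G.succ a, (if b = w then h a b else 1) := by
            refine Finset.prod_congr rfl fun b _ => ?_
            by_cases hb : b = w <;> simp [hb]
        _ = h a w := by rw [Finset.prod_ite_eq' (G.succ a) w (h a), if_pos hw]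
    · simp [ha]
  rw [Finset.prod_congr rfl fun a _ => key a, Finset.prod_ite_eq' Finset.univ v,
    if_pos (Finset.mem_univ v)]

lemma aux_ite_prod' (h : V → V → K) (v : V) :
    (∏ a : V, ∏ b ∈ G.succ a, h a b ^ (if a = v ∧ b ∈ G.succ v then 1 else 0))
      = ∏ b ∈ G.succ v, h v b := by
  have key : ∀ a : V, (∏ b ∈ G.succ a, h a b ^ (if a = v ∧ b ∈ G.succ v then 1 else 0))
      = if a = v then ∏ b ∈ G.succ v, h v b else 1 := by
    intro a
    by_cases ha : a = v
    · subst ha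
      simp only [true_and, if_pos rfl]
      refine Finset.prod_congr rfl fun b hb => ?_
      simp [hb]
    · simp [ha]
  rw [Finset.prod_congr rfl fun a _ => key a, Finset.prod_ite_eq' Finset.univ v,
    if_pos (Finset.mem_univ v)]

lemma aux_stratValue_terminal (h : V → V → K) (f : V → K) {v : V}
    (hv : G.owner v = none) :
    stratValue h f (.terminal v hv : StratTree G σ v) = f v := by
  simp only [stratValue, countE, countT, pow_zero, Finset.prod_const_one, one_mul]
  calc (∏ t ∈ Finset.univ.filter (fun t : V => G.owner t = none),
          f t ^ (if t = v then 1 else 0))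
      = ∏ t ∈ Finset.univ.filter (fun t : V => G.owner t = none),
          (if t = v then f t else 1) := by
        refine Finset.prod_congr rfl fun t _ => ?_
        by_cases ht : t = v <;> simp [ht]
    _ = f v := by
        rw [Finset.prod_ite_eq' _ v f, if_pos]
        simp [hv]

lemma aux_stratValue_choice (h : V → V → K) (f : V → K) {v w : V}
    (hv : G.owner v = some σ) (hw : w ∈ G.succ v) (s : StratTree G σ w) :
    stratValue h f (.choice v w hv hw s) = h v w * stratValue h f s := by
  simp only [stratValue, countE, countT, pow_add]
  rw [show (∏ a : V, ∏ b ∈ G.succ a,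
        h a b ^ (if a = v ∧ b = w then 1 else 0) * h a b ^ countE s a b)
      = (∏ a : V, ∏ b ∈ G.succ a, h a b ^ (if a = v ∧ b = w then 1 else 0)) *
        (∏ a : V, ∏ b ∈ G.succ a, h a b ^ countE s a b) by
    rw [← Finset.prod_mul_distrib]
    exact Finset.prod_congr rfl fun a _ => Finset.prod_mul_distrib]
  rw [aux_ite_prod h hw, mul_assoc]

lemma aux_stratValue_branch (h : V → V → K) (f : V → K) {v : V}
    (hv : G.owner v = some (!σ)) (s : (w : V) → w ∈ G.succ v → StratTree G σ w) :
    stratValue h f (.branch v hv s)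
      = (∏ b ∈ G.succ v, h v b) *
        ∏ w ∈ (G.succ v).attach, stratValue h f (s w.1 w.2) := by
  simp only [stratValue, countE, countT, pow_add]
  rw [show (∏ a : V, ∏ b ∈ G.succ a,
        h a b ^ (if a = v ∧ b ∈ G.succ v then 1 else 0) *
          h a b ^ (∑ w ∈ (G.succ v).attach, countE (s w.1 w.2) a b))
      = (∏ a : V, ∏ b ∈ G.succ a, h a b ^ (if a = v ∧ b ∈ G.succ v then 1 else 0)) *
        (∏ a : V, ∏ b ∈ G.succ a,
          h a b ^ (∑ w ∈ (G.succ v).attach, countE (s w.1 w.2) a b)) by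
    rw [← Finset.prod_mul_distrib]
    exact Finset.prod_congr rfl fun a _ => Finset.prod_mul_distrib]
  rw [aux_ite_prod' h v]
  have hE : (∏ a : V, ∏ b ∈ G.succ a,
      h a b ^ (∑ w ∈ (G.succ v).attach, countE (s w.1 w.2) a b))
      = ∏ w ∈ (G.succ v).attach, ∏ a : V, ∏ b ∈ G.succ a,
          h a b ^ countE (s w.1 w.2) a b := by
    rw [Finset.prod_comm]
    refine Finset.prod_congr rfl fun a _ => ?_
    rw [Finset.prod_comm]
    refine Finset.prod_congr rfl fun b _ => ?_
    rw [← Finset.prod_pow_eq_pow_sum]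
  have hT : (∏ t ∈ Finset.univ.filter (fun t : V => G.owner t = none),
      f t ^ (∑ w ∈ (G.succ v).attach, countT (s w.1 w.2) t))
      = ∏ w ∈ (G.succ v).attach,
          ∏ t ∈ Finset.univ.filter (fun t : V => G.owner t = none),
            f t ^ countT (s w.1 w.2) t := by
    rw [Finset.prod_comm]
    refine Finset.prod_congr rfl fun t _ => ?_
    rw [← Finset.prod_pow_eq_pow_sum]
  rw [hE, hT, mul_assoc, ← Finset.prod_mul_distrib]

end Aux

/-- if `h(e) = 1` for all moves `e`, or if K is multiplicatively
idempotent, then the value of each strategy is the product of the values of the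
plays it admits: `F(S) = Π_{x ∈ Plays(S)} f_σ(x)`. -/
theorem stmt17 {V K : Type*} [Fintype V] [DecidableEq V] [CommSemiring K]
    (G : GameGraph V) (σ : Bool) (h : V → V → K) (f : V → K)
    (hne : ∀ v w, w ∈ G.succ v → h v w ≠ 0)
    (hcase : (∀ a b : V, h a b = 1) ∨ (∀ a : K, a * a = a)) :
    ∀ (v : V) (S : StratTree G σ v),
      stratValue h f S = ((plays S).map (playVal h f)).prod := by
  have hpow : ∀ (a b : V) (n : ℕ), 0 < n → h a b ^ n = h a b := by
    rcases hcase with h1 | hid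
    · intro a b n hn; rw [h1 a b, one_pow]
    · intro a b n hn; exact aux_pow_idem hid _ n hn
  have key : ∀ (v w : V) (s : StratTree G σ w),
      (((plays s).map (List.cons v)).map (playVal h f)).prod
        = h v w * ((plays s).map (playVal h f)).prod := by
    intro v w s
    rw [Multiset.map_map]
    have h1 : ((plays s).map (playVal h f ∘ List.cons v)).prod
        = ((plays s).map (fun x => h v w * playVal h f x)).prod := by
      refine congrArg _ (Multiset.map_congr rfl fun x hx => ?_)
      obtain ⟨r, rfl⟩ := aux_plays_head s x hx
      rfl
    rw [h1, Multiset.prod_map_mul]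
    congr 1
    rw [Multiset.map_const', Multiset.prod_replicate]
    exact hpow v w _ (Multiset.card_pos.mpr
      (by simpa using aux_plays_ne (G := G) (σ := σ) h s))
  intro v S
  induction S with
  | terminal v hv =>
      rw [aux_stratValue_terminal]
      simp [plays, playVal]
  | choice v w hv hw s ih =>
      rw [aux_stratValue_choice, ih]
      exact (key v w s).symm
  | branch v hv s ih =>
      rw [aux_stratValue_branch]
      simp only [plays, Multiset.map_bind, Multiset.prod_bind]
      have : ((G.succ v).attach.val.map fun w =>
            (((plays (s w.1 w.2)).map (List.cons v)).map (playVal h f)).prod).prod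
          = ∏ w ∈ (G.succ v).attach,
              h v w.1 * ((plays (s w.1 w.2)).map (playVal h f)).prod := by
        exact Finset.prod_congr rfl fun w _ => by
          rw [key v w.1 (s w.1 w.2)]
      rw [this, Finset.prod_mul_distrib, Finset.prod_attach (G.succ v) (h v)]
      congr 1
      exact Finset.prod_congr rfl fun w _ => ih w.1 w.2
end
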